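/- arXiv:1403.6085 — 2 statements merged into one kernel-verified Lean document; each statement's English description precedes it below -/
import Mathlib

section
/- Let B > 0, A ≥ 0, ε > 0 and v ≥ 0 be real numbers, let o be a real number with o² = 1, and let a, t satisfy −B ≤ a ≤ A, 0 ≤ t ≤ ε and v + a·t ≥ 0. Set K = (A/B + 1)·(A·ε²/2 + ε·v), x' = x + o·(v·t + a·t²/2) and v' = v + a·t. If real numbers xlb, x, xub satisfy xlb + ((1 − o)/2)·(v²/(2·B) + K) < x < xub − ((1 + o)/2)·(v²/(2·B) + K), then xlb + ((1 − o)/2)·v'²/(2·B) < x' < xub − ((1 + o)/2)·v'²/(2·B). -/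
/-!
Write `d = v t + a t² / 2` for the distance covered in the step. Since `(v + a t)² = v² + 2 a d`,
the new braking distance plus the distance covered is `v² / (2B) + (B + a) d / B`, and
`B + a ≤ A + B` and `0 ≤ d ≤ A ε² / 2 + ε v` bound `(B + a) d / B` by `K`. For `o = ±1` only the
margin on the bound the robot drives toward is nonzero, so the step moves the robot away from the
other bound and uses up at most `K` of the margin toward this one.
-/

lemma displacement_nonneg {v a t : ℝ} (hv : 0 ≤ v) (ht : 0 ≤ t) (hvt : 0 ≤ v + a * t) :
    0 ≤ v * t + a * t ^ 2 / 2 := by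
  have h : v * t + a * t ^ 2 / 2 = t * (v + (v + a * t)) / 2 := by ring
  rw [h]
  positivity

lemma displacement_le {A ε v a t : ℝ} (hA : 0 ≤ A) (hv : 0 ≤ v) (ha : a ≤ A)
    (ht₀ : 0 ≤ t) (ht : t ≤ ε) :
    v * t + a * t ^ 2 / 2 ≤ A * ε ^ 2 / 2 + ε * v := by
  have hvt : v * t ≤ ε * v := by rw [mul_comm]; exact mul_le_mul_of_nonneg_right ht hv
  have hat : a * t ^ 2 ≤ A * ε ^ 2 :=
    calc a * t ^ 2 ≤ A * t ^ 2 := mul_le_mul_of_nonneg_right ha (sq_nonneg t)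
      _ ≤ A * ε ^ 2 := mul_le_mul_of_nonneg_left (pow_le_pow_left₀ ht₀ ht 2) hA
  linarith

lemma displacement_add_brakingDist_le {B A ε v a t : ℝ} (hB : 0 < B) (hA : 0 ≤ A) (hv : 0 ≤ v)
    (ha : a ≤ A) (ht₀ : 0 ≤ t) (ht : t ≤ ε) (hvt : 0 ≤ v + a * t) :
    v * t + a * t ^ 2 / 2 + (v + a * t) ^ 2 / (2 * B)
      ≤ v ^ 2 / (2 * B) + (A / B + 1) * (A * ε ^ 2 / 2 + ε * v) := by
  set d := v * t + a * t ^ 2 / 2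
  set K := A * ε ^ 2 / 2 + ε * v
  have hLHS : d + (v + a * t) ^ 2 / (2 * B) = v ^ 2 / (2 * B) + (B + a) * d / B := by
    field_simp
    ring
  have hRHS : (A / B + 1) * K = (A + B) * K / B := by
    field_simp
  have hdK : (B + a) * d ≤ (A + B) * K :=
    mul_le_mul (by linarith) (displacement_le hA hv ha ht₀ ht)
      (displacement_nonneg hv ht₀ hvt) (by linarith)
  rw [hLHS, hRHS]
  gcongr

theorem acceleration_preserves_bounds_general
    (B A ε v o a t xlb x xub : ℝ)
    (hB : B > 0) (hA : A ≥ 0) (hv : v ≥ 0) (ho : o ^ 2 = 1)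
    (ha2 : a ≤ A) (ht1 : 0 ≤ t) (ht2 : t ≤ ε)
    (hvt : v + a * t ≥ 0)
    (hlo : xlb + ((1 - o) / 2) * (v ^ 2 / (2 * B) + (A / B + 1) * (A * ε ^ 2 / 2 + ε * v)) < x)
    (hhi : x < xub - ((1 + o) / 2) * (v ^ 2 / (2 * B) + (A / B + 1) * (A * ε ^ 2 / 2 + ε * v))) :
    xlb + ((1 - o) / 2) * (v + a * t) ^ 2 / (2 * B) < x + o * (v * t + a * t ^ 2 / 2) ∧
      x + o * (v * t + a * t ^ 2 / 2) < xub - ((1 + o) / 2) * (v + a * t) ^ 2 / (2 * B) := by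
  have hd := displacement_nonneg hv ht1 hvt
  have hmargin := displacement_add_brakingDist_le hB hA hv ha2 ht1 ht2 hvt
  have hbrake : 0 ≤ (v + a * t) ^ 2 / (2 * B) := by positivity
  obtain rfl | rfl : o = 1 ∨ o = -1 := sq_eq_one_iff.mp ho
  all_goals
    norm_num at hlo hhi ⊢
    constructor <;> linarith

theorem acceleration_preserves_bounds
    (B A ε v o a t xlb x xub : ℝ)
    (hB : B > 0) (hA : A ≥ 0) (hε : ε > 0) (hv : v ≥ 0) (ho : o ^ 2 = 1)
    (ha1 : -B ≤ a) (ha2 : a ≤ A) (ht1 : 0 ≤ t) (ht2 : t ≤ ε)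
    (hvt : v + a * t ≥ 0)
    (hlo : xlb + ((1 - o) / 2) * (v ^ 2 / (2 * B) + (A / B + 1) * (A * ε ^ 2 / 2 + ε * v)) < x)
    (hhi : x < xub - ((1 + o) / 2) * (v ^ 2 / (2 * B) + (A / B + 1) * (A * ε ^ 2 / 2 + ε * v))) :
    xlb + ((1 - o) / 2) * (v + a * t) ^ 2 / (2 * B) < x + o * (v * t + a * t ^ 2 / 2) ∧
      x + o * (v * t + a * t ^ 2 / 2) < xub - ((1 + o) / 2) * (v + a * t) ^ 2 / (2 * B) :=
  acceleration_preserves_bounds_general B A ε v o a t xlb x xub hB hA hv ho ha2 ht1 ht2 hvt hlo hhi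
end

section
/- Let B > 0, A ≥ 0, ε > 0 and v0 ≥ 0 be real numbers, let a satisfy −B ≤ a ≤ A and v0 + a·t ≥ 0 for all t ∈ [0, ε], let p : ℝ → ℝ × ℝ be differentiable on [0, ε] with ‖p'(t)‖ ≤ v0 + a·t (Euclidean norm) for every t ∈ [0, ε], and let po ∈ ℝ × ℝ satisfy max(|p(0).1 − po.1|, |p(0).2 − po.2|) > v0²/(2·B) + (A/B + 1)·(A·ε²/2 + ε·v0). Then for every t ∈ [0, ε], max(|p(t).1 − po.1|, |p(t).2 − po.2|) > (v0 + a·t)²/(2·B). -/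
/-!
The sup-norm distance to the obstacle can shrink during the cycle by at most the distance
travelled, and the speed bound `v0 + a t` (which dominates the sup norm of the velocity) bounds
that distance by `v0 t + a t² / 2`. It remains to check that the compensation term covers both
this travel and the growth of the braking distance from `v0² / 2B` to `(v0 + a t)² / 2B`: after
clearing denominators this is `(a + B)(2 v0 t + a t²) ≤ (A + B)(2 v0 ε + A ε²)`, which holds
because the left side is monotone in `a` and then in `t`.
-/

open Set

lemma Prod.norm_le_sqrt_sq_add_sq (x : ℝ × ℝ) : ‖x‖ ≤ √(x.1 ^ 2 + x.2 ^ 2) :=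
  max_le (Real.abs_le_sqrt (by nlinarith [sq_nonneg x.2]))
    (Real.abs_le_sqrt (by nlinarith [sq_nonneg x.1]))

lemma Prod.max_abs_sub_eq_norm_sub (x y : ℝ × ℝ) : max |x.1 - y.1| |x.2 - y.2| = ‖x - y‖ := rfl

lemma norm_sub_le_of_norm_deriv_le_affine {E : Type*} [NormedAddCommGroup E] [NormedSpace ℝ E]
    {f f' : ℝ → E} {ε v a : ℝ}
    (hf : ∀ t ∈ Icc 0 ε, HasDerivWithinAt f (f' t) (Icc 0 ε) t)
    (hbound : ∀ t ∈ Icc 0 ε, ‖f' t‖ ≤ v + a * t) :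
    ∀ t ∈ Icc 0 ε, ‖f t - f 0‖ ≤ v * t + a * t ^ 2 / 2 := by
  have hcont : ContinuousOn (fun t ↦ f t - f 0) (Icc 0 ε) :=
    fun t ht ↦ (hf t ht).continuousWithinAt.sub continuousWithinAt_const
  have hderiv : ∀ t ∈ Ico 0 ε, HasDerivWithinAt (fun t ↦ f t - f 0) (f' t) (Ici t) t :=
    fun t ht ↦ ((hf t (Ico_subset_Icc_self ht)).sub_const (f 0)).mono_of_mem_nhdsWithin
      (Icc_mem_nhdsGE_of_mem ht)
  have htravel : ∀ t, HasDerivAt (fun t ↦ v * t + a * t ^ 2 / 2) (v + a * t) t := fun t ↦ by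
    refine (((hasDerivAt_id t).const_mul v).add
      (((hasDerivAt_pow 2 t).const_mul a).div_const 2)).congr_deriv ?_
    norm_num
    ring
  exact image_norm_le_of_norm_deriv_right_le_deriv_boundary hcont hderiv (by simp) htravel
    (fun t ht ↦ hbound t (Ico_subset_Icc_self ht))

lemma braking_distance_add_travel_le {A B a v0 t ε : ℝ} (hB : 0 < B) (haB : -B ≤ a)
    (haA : a ≤ A) (ht : 0 ≤ t) (htε : t ≤ ε) (hv0 : 0 ≤ v0) (hvt : 0 ≤ v0 + a * t)
    (hvε : 0 ≤ v0 + a * ε) :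
    (v0 + a * t) ^ 2 / (2 * B) + (v0 * t + a * t ^ 2 / 2) ≤
      v0 ^ 2 / (2 * B) + (A / B + 1) * (A * ε ^ 2 / 2 + ε * v0) := by
  have hAB : 0 ≤ A + B := by linarith
  have hmono_a : (a + B) * (2 * v0 * t + a * t ^ 2) ≤ (A + B) * (2 * v0 * t + A * t ^ 2) := by
    have : 0 ≤ 2 * v0 * t + a * t ^ 2 := by nlinarith
    nlinarith [mul_nonneg (sub_nonneg.2 haA) this, mul_nonneg hAB (sq_nonneg t)]
  -- `v0 + A s ≥ v0 + a s ≥ 0` on `[0, ε]`, so `s ↦ 2 v0 s + A s²` is nondecreasing there.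
  have hmono_t : 2 * v0 * t + A * t ^ 2 ≤ 2 * v0 * ε + A * ε ^ 2 := by
    have : 0 ≤ 2 * v0 + A * (ε + t) := by nlinarith
    nlinarith [mul_nonneg (sub_nonneg.2 htε) this]
  have key : (a + B) * (2 * v0 * t + a * t ^ 2) ≤ (A + B) * (2 * v0 * ε + A * ε ^ 2) :=
    hmono_a.trans (mul_le_mul_of_nonneg_left hmono_t hAB)
  have hgap : v0 ^ 2 / (2 * B) + (A / B + 1) * (A * ε ^ 2 / 2 + ε * v0) -
      ((v0 + a * t) ^ 2 / (2 * B) + (v0 * t + a * t ^ 2 / 2)) =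
      ((A + B) * (2 * v0 * ε + A * ε ^ 2) - (a + B) * (2 * v0 * t + a * t ^ 2)) / (2 * B) := by
    field_simp
    ring
  rw [← sub_nonneg, hgap]
  exact div_nonneg (sub_nonneg.2 key) (by positivity)

theorem planar_acceleration_preserves_invariant_general
    (B A ε v0 a : ℝ) (hB : B > 0)
    (ha1 : -B ≤ a) (ha2 : a ≤ A)
    (p p' : ℝ → ℝ × ℝ)
    (hderiv : ∀ t ∈ Set.Icc (0 : ℝ) ε, HasDerivWithinAt p (p' t) (Set.Icc (0 : ℝ) ε) t)
    (hspeed : ∀ t ∈ Set.Icc (0 : ℝ) ε,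
      Real.sqrt ((p' t).1 ^ 2 + (p' t).2 ^ 2) ≤ v0 + a * t)
    (po : ℝ × ℝ)
    (hsafe : max |(p 0).1 - po.1| |(p 0).2 - po.2| >
      v0 ^ 2 / (2 * B) + (A / B + 1) * (A * ε ^ 2 / 2 + ε * v0)) :
    ∀ t ∈ Set.Icc (0 : ℝ) ε,
      max |(p t).1 - po.1| |(p t).2 - po.2| > (v0 + a * t) ^ 2 / (2 * B) := by
  intro t ht
  rw [Prod.max_abs_sub_eq_norm_sub] at hsafe ⊢
  have hspeed' : ∀ s ∈ Icc 0 ε, ‖p' s‖ ≤ v0 + a * s :=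
    fun s hs ↦ (Prod.norm_le_sqrt_sq_add_sq _).trans (hspeed s hs)
  have hvnonneg : ∀ s ∈ Icc 0 ε, 0 ≤ v0 + a * s := fun s hs ↦ (norm_nonneg _).trans (hspeed' s hs)
  have hv0 : 0 ≤ v0 := by simpa using hvnonneg 0 ⟨le_rfl, ht.1.trans ht.2⟩
  have hbudget := braking_distance_add_travel_le hB ha1 ha2 ht.1 ht.2 hv0 (hvnonneg t ht)
    (hvnonneg ε ⟨ht.1.trans ht.2, le_rfl⟩)
  have htravel := norm_sub_le_of_norm_deriv_le_affine hderiv hspeed' t ht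
  have htriangle := norm_sub_le_norm_sub_add_norm_sub (p 0) (p t) po
  rw [norm_sub_rev (p 0) (p t)] at htriangle
  linarith

theorem planar_acceleration_preserves_invariant
    (B A ε v0 a : ℝ) (hB : B > 0) (hA : A ≥ 0) (hε : ε > 0) (hv0 : v0 ≥ 0)
    (ha1 : -B ≤ a) (ha2 : a ≤ A)
    (hvnonneg : ∀ t ∈ Set.Icc (0 : ℝ) ε, v0 + a * t ≥ 0)
    (p p' : ℝ → ℝ × ℝ)
    (hderiv : ∀ t ∈ Set.Icc (0 : ℝ) ε, HasDerivWithinAt p (p' t) (Set.Icc (0 : ℝ) ε) t)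
    (hspeed : ∀ t ∈ Set.Icc (0 : ℝ) ε,
      Real.sqrt ((p' t).1 ^ 2 + (p' t).2 ^ 2) ≤ v0 + a * t)
    (po : ℝ × ℝ)
    (hsafe : max |(p 0).1 - po.1| |(p 0).2 - po.2| >
      v0 ^ 2 / (2 * B) + (A / B + 1) * (A * ε ^ 2 / 2 + ε * v0)) :
    ∀ t ∈ Set.Icc (0 : ℝ) ε,
      max |(p t).1 - po.1| |(p t).2 - po.2| > (v0 + a * t) ^ 2 / (2 * B) :=
  planar_acceleration_preserves_invariant_general B A ε v0 a hB ha1 ha2 p p' hderiv hspeed po hsafe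
end
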